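/- arXiv:1709.01882 — 2 statements merged into one kernel-verified Lean document; each statement's English description precedes it below -/
import Mathlib

section
/- The map sending x₁x₂…x_ℓ to its reversal is an isomorphism from the subKautz digraph sK(d,ℓ) to its converse digraph. -/
/-- Consecutive entries are distinct (subKautz vertex condition). -/
abbrev consecNe {m n : ℕ} (x : Fin m → Fin n) : Prop :=
  ∀ i j : Fin m, j.val = i.val + 1 → x i ≠ x j

/-- Adjacency in the subKautz digraph `sK(d,ℓ)`: `y` is the left shift of `x` with a new
last symbol distinct from `x₁` and from `x_ℓ`. -/
abbrev sKAdj {m n : ℕ} (x y : Fin m → Fin n) : Prop :=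
  (∀ i j : Fin m, j.val = i.val + 1 → y i = x j) ∧
  (∀ i j : Fin m, i.val = m - 1 → j.val = 0 → y i ≠ x j) ∧
  (∀ i : Fin m, i.val = m - 1 → y i ≠ x i)

/-- The reversal map `Ψ(x₁x₂…x_ℓ) = x_ℓ…x₂x₁`. -/
def rev {m n : ℕ} (x : Fin m → Fin n) : Fin m → Fin n :=
  fun i => x ⟨m - 1 - i.val, by have := i.isLt; omega⟩

/-
Reversal reads `x₂ … x_ℓ y` backwards as `y x_ℓ … x₂`, the right shift of `x_ℓ … x₁` with new first
symbol `y`. So an arc `x → x₂…x_ℓ y` turns into the arc `y x_ℓ … x₂ → x_ℓ … x₁`, whose new last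
symbol `x₁` must differ from `y` (given) and from `x₂` (consecutive entries of `x` are distinct).
Reversal is an involution preserving the vertex condition, hence a bijection of the vertex set.
-/

section Reversal

variable {m n : ℕ}

lemma rev_apply (x : Fin m → Fin n) (i : Fin m) : rev x i = x i.rev := by
  simp only [rev]
  congr 1
  ext
  simp only [Fin.val_rev]
  omega

lemma rev_involutive : Function.Involutive (rev (m := m) (n := n)) :=
  fun x => funext fun i => by simp only [rev_apply, Fin.rev_rev]

lemma consecNe_rev {x : Fin m → Fin n} (hx : consecNe x) : consecNe (rev x) := by
  intro i j hij
  rw [rev_apply, rev_apply]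
  exact (hx j.rev i.rev (by simp only [Fin.val_rev]; omega)).symm

lemma sKAdj.rev {x y : Fin m → Fin n} (hx : consecNe x) (h : sKAdj x y) :
    sKAdj (rev y) (rev x) := by
  obtain ⟨hshift, hne_first, hne_last⟩ := h
  refine ⟨fun i j hij => ?_, fun i j hi hj => ?_, fun i hi => ?_⟩
  · rw [rev_apply, rev_apply]
    exact (hshift j.rev i.rev (by simp only [Fin.val_rev]; omega)).symm
  · rw [rev_apply, rev_apply]
    exact (hne_first j.rev i.rev (by simp only [Fin.val_rev]; omega)
      (by simp only [Fin.val_rev]; omega)).symm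
  · rw [rev_apply, rev_apply]
    have hi0 : i.rev.val = 0 := by simp only [Fin.val_rev]; omega
    by_cases hm : m = 1
    · -- for `m = 1` the first and last symbols coincide
      have : i.rev = i := Fin.ext (by omega)
      rw [this]
      exact (hne_last i hi).symm
    · have h1 : 1 < m := by omega
      rw [hshift i.rev ⟨1, h1⟩ (by simp only; omega)]
      exact hx i.rev ⟨1, h1⟩ (by simp only; omega)

end Reversal

theorem stmt8_general (d ℓ : ℕ) :
    (∀ x : Fin ℓ → Fin (d + 1), consecNe x → consecNe (rev x)) ∧
    Set.BijOn (rev (m := ℓ) (n := d + 1)) {x | consecNe x} {x | consecNe x} ∧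
    (∀ x y : Fin ℓ → Fin (d + 1), consecNe x → consecNe y →
      (sKAdj x y ↔ sKAdj (rev y) (rev x))) := by
  have hmaps : Set.MapsTo (rev (m := ℓ) (n := d + 1)) {x | consecNe x} {x | consecNe x} :=
    fun _ hx => consecNe_rev hx
  refine ⟨fun _ => consecNe_rev, ?_, fun x y hx hy => ⟨sKAdj.rev hx, fun h => ?_⟩⟩
  · exact Set.InvOn.bijOn ⟨fun x _ => rev_involutive x, fun x _ => rev_involutive x⟩ hmaps hmaps
  · simpa only [rev_involutive _] using h.rev (consecNe_rev hy)

/-- Reversal is an isomorphism from the subKautz digraph `sK(d,ℓ)` to its converse: it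
maps vertices bijectively to vertices, and `x → y` is an arc of `sK(d,ℓ)` iff
`Ψ(y) → Ψ(x)` is an arc of `sK(d,ℓ)`. -/
theorem stmt8 (d ℓ : ℕ) (hd : 2 ≤ d) (hℓ : 2 ≤ ℓ) :
    (∀ x : Fin ℓ → Fin (d + 1), consecNe x → consecNe (rev x)) ∧
    Set.BijOn (rev (m := ℓ) (n := d + 1)) {x | consecNe x} {x | consecNe x} ∧
    (∀ x y : Fin ℓ → Fin (d + 1), consecNe x → consecNe y →
      (sKAdj x y ↔ sKAdj (rev y) (rev x))) :=
  stmt8_general d ℓ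
end

section
/- In the subKautz digraph sK(d,2) with d ≥ 3, the numbers of vertices at distance 0, 1, 2, 3, 4 from any fixed vertex are respectively 1, d−1, (d−1)², 2(d−1), 1, and these sum to d² + d, the total number of vertices; in particular sK(d,2) has diameter 4 and every vertex has a unique vertex at maximum distance. -/
/-!
A walk from `ab` traces a word beginning with `ab` in which any three consecutive letters are
distinct, and it ends at the vertex formed by the last two letters. For words of at most five
letters this pins down where a walk can end (a walk of length `3` cannot end at `b*`, so `ba` is
at distance `4`); conversely, with at least four letters a fresh one is always available, so
every vertex is reached as soon as these constraints allow. Each distance class is then a set of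
pairs `xy` with `x` in a fixed set and `y` in a set of fixed size depending on `x`, which makes
the counts immediate.
-/

/-- Vertex of `sK(d,2)`: an ordered pair `x₁x₂` with `x₁ ≠ x₂`. -/
abbrev sk2Vert {n : ℕ} (x : Fin 2 → Fin n) : Prop := x 0 ≠ x 1

/-- Arc of `sK(d,2)`: `x₁x₂ → x₂x₃` with `x₃ ∉ {x₁, x₂}`. -/
abbrev sk2Adj {n : ℕ} (x y : Fin 2 → Fin n) : Prop :=
  y 0 = x 1 ∧ y 1 ≠ x 0 ∧ y 1 ≠ x 1

/-- A walk of length `k` in `sK(d,2)` from `u` to `v`. -/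
abbrev sk2Walk {n : ℕ} (k : ℕ) (u v : Fin 2 → Fin n) : Prop :=
  ∃ w : Fin (k + 1) → Fin 2 → Fin n, w 0 = u ∧ w (Fin.last k) = v ∧
    (∀ i, sk2Vert (w i)) ∧ ∀ i j : Fin (k + 1), j.val = i.val + 1 → sk2Adj (w i) (w j)

/-- `v` is at distance exactly `m` from `u` in `sK(d,2)`. -/
abbrev sk2DistEq {n : ℕ} (u v : Fin 2 → Fin n) (m : ℕ) : Prop :=
  sk2Walk m u v ∧ ∀ k < m, ¬ sk2Walk k u v

open Finset

section Walks

variable {n : ℕ} {u v w : Fin 2 → Fin n}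

lemma sk2Walk_zero_iff : sk2Walk 0 u v ↔ v = u ∧ sk2Vert u := by
  constructor
  · rintro ⟨p, hp0, hpl, hvert, -⟩
    exact ⟨hpl.symm.trans hp0, hp0 ▸ hvert 0⟩
  · rintro ⟨rfl, hv⟩
    exact ⟨fun _ => v, rfl, rfl, fun _ => hv, fun i j hij => by omega⟩

lemma sk2Walk_succ_iff {k : ℕ} :
    sk2Walk (k + 1) u v ↔ ∃ w, sk2Walk k u w ∧ sk2Adj w v ∧ sk2Vert v := by
  constructor
  · rintro ⟨p, hp0, hpl, hvert, hadj⟩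
    refine ⟨p (Fin.last k).castSucc,
      ⟨fun i => p i.castSucc, hp0, rfl, fun i => hvert _, fun i j hij => hadj _ _ hij⟩, ?_,
      hpl ▸ hvert _⟩
    simpa [hpl] using hadj (Fin.last k).castSucc (Fin.last (k + 1)) (by simp)
  · rintro ⟨w, ⟨p, hp0, hpl, hvert, hadj⟩, hwv, hv⟩
    refine ⟨Fin.snoc (α := fun _ => Fin 2 → Fin n) p v, ?_, by simp, ?_, ?_⟩
    · simpa using hp0
    · intro i
      cases i using Fin.lastCases <;> simp [hv, hvert]
    · intro i j hij
      cases j using Fin.lastCases with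
      | last =>
        obtain rfl : i = (Fin.last k).castSucc := by
          ext; simp only [Fin.val_last, Fin.val_castSucc] at hij ⊢; omega
        simpa [hpl] using hwv
      | cast j =>
        cases i using Fin.lastCases with
        | last => simp only [Fin.val_last, Fin.val_castSucc] at hij; omega
        | cast i => simpa using hadj i j (by simpa using hij)

lemma sk2Walk_zero (hu : sk2Vert u) : sk2Walk 0 u u :=
  sk2Walk_zero_iff.2 ⟨rfl, hu⟩

lemma sk2Walk.snoc {k : ℕ} (h : sk2Walk k u w) (hwv : sk2Adj w v) (hv : sk2Vert v) :
    sk2Walk (k + 1) u v :=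
  sk2Walk_succ_iff.2 ⟨w, h, hwv, hv⟩

def skDist (u v : Fin 2 → Fin n) : ℕ :=
  if v 0 = u 0 then (if v 1 = u 1 then 0 else 3)
  else if v 0 = u 1 then (if v 1 = u 0 then 4 else 1)
  else if v 1 = u 1 then 3 else 2

lemma skDist_le_four : skDist u v ≤ 4 := by
  unfold skDist; split_ifs <;> omega

lemma skDist_le_of_sk2Walk {k : ℕ} (h : sk2Walk k u v) : skDist u v ≤ k := by
  obtain _ | _ | _ | _ | k := k
  · obtain ⟨rfl, -⟩ := sk2Walk_zero_iff.1 h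
    simp [skDist]
  · obtain ⟨w, hw, ⟨hv0, hv1, -⟩, -⟩ := sk2Walk_succ_iff.1 h
    obtain ⟨rfl, hu⟩ := sk2Walk_zero_iff.1 hw
    grind [skDist]
  · obtain ⟨w, hw, ⟨hv0, hv1, -⟩, -⟩ := sk2Walk_succ_iff.1 h
    obtain ⟨x, hx, ⟨hw0, hw1, hw1'⟩, -⟩ := sk2Walk_succ_iff.1 hw
    obtain ⟨rfl, -⟩ := sk2Walk_zero_iff.1 hx
    grind [skDist]
  · obtain ⟨w, hw, ⟨hv0, -, -⟩, -⟩ := sk2Walk_succ_iff.1 h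
    obtain ⟨x, hx, ⟨-, hw1, -⟩, -⟩ := sk2Walk_succ_iff.1 hw
    obtain ⟨y, hy, ⟨hx0, -, -⟩, -⟩ := sk2Walk_succ_iff.1 hx
    obtain ⟨rfl, -⟩ := sk2Walk_zero_iff.1 hy
    grind [skDist]
  · exact skDist_le_four.trans (by omega)

lemma exists_ne_ne_ne (hn : 4 ≤ n) (a b c : Fin n) : ∃ x, x ≠ a ∧ x ≠ b ∧ x ≠ c := by
  obtain ⟨x, -, hx⟩ := exists_mem_notMem_of_card_lt_card (s := {a, b, c}) (t := univ)
    (card_le_three.trans_lt (by rw [card_univ, Fintype.card_fin]; omega))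
  exact ⟨x, by simpa [not_or] using hx⟩

lemma sk2Walk_one (hu : sk2Vert u) (h0 : v 0 = u 1) (h1 : v 1 ≠ u 0) (h2 : v 1 ≠ u 1) :
    sk2Walk 1 u v :=
  (sk2Walk_zero hu).snoc ⟨h0, h1, h2⟩ (by rw [sk2Vert, h0]; exact h2.symm)

lemma sk2Walk_two (hu : sk2Vert u) (hv : sk2Vert v) (h0 : v 0 ≠ u 0) (h1 : v 0 ≠ u 1)
    (h2 : v 1 ≠ u 1) : sk2Walk 2 u v :=
  (sk2Walk_one (v := ![u 1, v 0]) hu rfl h0 h1).snoc ⟨rfl, h2, hv.symm⟩ hv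

lemma sk2Walk_three_of_fst_eq (hn : 4 ≤ n) (hu : sk2Vert u) (hv : sk2Vert v)
    (h0 : v 0 = u 0) : sk2Walk 3 u v := by
  obtain ⟨c, hca, hcb, hcv⟩ := exists_ne_ne_ne hn (u 0) (u 1) (v 1)
  exact (sk2Walk_two (v := ![c, u 0]) hu hca hca hcb hu).snoc
    ⟨h0, hcv.symm, by simpa [h0] using hv.symm⟩ hv

lemma sk2Walk_three_of_snd_eq (hn : 4 ≤ n) (hu : sk2Vert u) (h0 : v 0 ≠ u 1)
    (h1 : v 1 = u 1) : sk2Walk 3 u v := by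
  obtain ⟨c, hca, hcb, hcv⟩ := exists_ne_ne_ne hn (u 0) (u 1) (v 0)
  exact (sk2Walk_two (v := ![c, v 0]) hu hcv hca hcb h0).snoc
    ⟨rfl, by simpa [h1] using hcb.symm, by simpa [h1] using h0.symm⟩
    (by rw [sk2Vert, h1]; exact h0)

lemma sk2Walk_four (hn : 4 ≤ n) (hu : sk2Vert u) (h0 : v 0 = u 1) (h1 : v 1 = u 0) :
    sk2Walk 4 u v := by
  obtain ⟨e, hea, heb, -⟩ := exists_ne_ne_ne hn (u 0) (u 1) (u 1)
  exact (sk2Walk_three_of_snd_eq (v := ![e, u 1]) hn hu heb rfl).snoc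
    ⟨h0, by simpa [h1] using hea.symm, by simpa [h1] using hu⟩
    (by rw [sk2Vert, h0, h1]; exact hu.symm)

lemma sk2Walk_skDist (hn : 4 ≤ n) (hu : sk2Vert u) (hv : sk2Vert v) :
    sk2Walk (skDist u v) u v := by
  unfold skDist
  split_ifs with h0 h1 h0' h1' h1''
  · obtain rfl : v = u := funext (Fin.forall_fin_two.2 ⟨h0, h1⟩)
    exact sk2Walk_zero hu
  · exact sk2Walk_three_of_fst_eq hn hu hv h0
  · exact sk2Walk_four hn hu h0' h1'
  · exact sk2Walk_one hu h0' h1' (h0' ▸ hv.symm)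
  · exact sk2Walk_three_of_snd_eq hn hu h0' h1''
  · exact sk2Walk_two hu hv h0 h0' h1''

lemma sk2DistEq_iff (hn : 4 ≤ n) (hu : sk2Vert u) (hv : sk2Vert v) {m : ℕ} :
    sk2DistEq u v m ↔ skDist u v = m := by
  constructor
  · rintro ⟨hm, hlt⟩
    exact le_antisymm (skDist_le_of_sk2Walk hm)
      (not_lt.1 fun h => hlt _ h (sk2Walk_skDist hn hu hv))
  · rintro rfl
    exact ⟨sk2Walk_skDist hn hu hv, fun k hk hw => (skDist_le_of_sk2Walk hw).not_gt hk⟩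

lemma setOf_sk2DistEq (hn : 4 ≤ n) (hu : sk2Vert u) (m : ℕ) :
    {v | sk2Vert v ∧ sk2DistEq u v m} = {v | sk2Vert v ∧ skDist u v = m} :=
  Set.ext fun _ => and_congr_right fun hv => sk2DistEq_iff hn hu hv

end Walks

lemma ncard_setOf_fst_mem_snd_mem {α : Type*} (s : Finset α) (t : α → Finset α) {k : ℕ}
    (ht : ∀ x ∈ s, (t x).card = k) :
    {v : Fin 2 → α | v 0 ∈ s ∧ v 1 ∈ t (v 0)}.ncard = s.card * k := by
  have hinj : Function.Injective fun p : (_ : α) × α => ![p.1, p.2] := fun p q h =>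
    Sigma.ext (congrFun h 0) (heq_of_eq (congrFun h 1))
  have himage : {v : Fin 2 → α | v 0 ∈ s ∧ v 1 ∈ t (v 0)}
      = (fun p : (_ : α) × α => ![p.1, p.2]) '' ↑(s.sigma t) := by
    ext v
    refine ⟨fun hv => ⟨⟨v 0, v 1⟩, by simpa using hv, funext (Fin.forall_fin_two.2 ⟨rfl, rfl⟩)⟩, ?_⟩
    rintro ⟨p, hp, rfl⟩
    simpa using hp
  rw [himage, Set.ncard_image_of_injective _ hinj, Set.ncard_coe_finset, card_sigma,
    sum_const_nat ht]

section Layers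

variable {d : ℕ} {u : Fin 2 → Fin (d + 1)}

lemma card_compl_pair {a b : Fin (d + 1)} (hab : a ≠ b) : ({a, b}ᶜ : Finset _).card = d - 1 := by
  rw [card_compl, card_pair hab]
  simp

lemma ncard_sk2Vert : {v : Fin 2 → Fin (d + 1) | sk2Vert v}.ncard = d ^ 2 + d := by
  have hpairs : {v : Fin 2 → Fin (d + 1) | sk2Vert v}
      = {v | v 0 ∈ univ ∧ v 1 ∈ ({v 0}ᶜ : Finset _)} := by
    ext v; simp [eq_comm]
  rw [hpairs, ncard_setOf_fst_mem_snd_mem univ (fun x => {x}ᶜ) (k := d)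
    fun x _ => by simp [card_compl],
    card_univ, Fintype.card_fin]
  ring

lemma ncard_skDist_eq_zero (hu : sk2Vert u) :
    {v | sk2Vert v ∧ skDist u v = 0}.ncard = 1 := by
  have hlayer : {v | sk2Vert v ∧ skDist u v = 0}
      = {v | v 0 ∈ ({u 0} : Finset _) ∧ v 1 ∈ ({u 1} : Finset _)} := by
    ext v; simp only [Set.mem_ofPred_eq, skDist, mem_singleton]; split_ifs <;> grind
  rw [hlayer, ncard_setOf_fst_mem_snd_mem _ _ fun x _ => card_singleton _, card_singleton]

lemma ncard_skDist_eq_one (hu : sk2Vert u) :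
    {v | sk2Vert v ∧ skDist u v = 1}.ncard = d - 1 := by
  have hlayer : {v | sk2Vert v ∧ skDist u v = 1}
      = {v | v 0 ∈ ({u 1} : Finset _) ∧ v 1 ∈ ({u 0, u 1}ᶜ : Finset _)} := by
    ext v; simp only [Set.mem_ofPred_eq, skDist, mem_singleton, mem_compl, mem_insert]
    split_ifs <;> grind
  rw [hlayer, ncard_setOf_fst_mem_snd_mem _ _ fun x _ => card_compl_pair hu, card_singleton,
    one_mul]

lemma ncard_skDist_eq_two (hu : sk2Vert u) :
    {v | sk2Vert v ∧ skDist u v = 2}.ncard = (d - 1) ^ 2 := by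
  have hlayer : {v | sk2Vert v ∧ skDist u v = 2}
      = {v | v 0 ∈ ({u 0, u 1}ᶜ : Finset _) ∧ v 1 ∈ ({u 1, v 0}ᶜ : Finset _)} := by
    ext v; simp only [Set.mem_ofPred_eq, skDist, mem_compl, mem_insert, mem_singleton]
    split_ifs <;> grind
  rw [hlayer, ncard_setOf_fst_mem_snd_mem _ (fun x => {u 1, x}ᶜ) fun x hx => card_compl_pair (by grind [mem_compl]),
    card_compl_pair hu, sq]

lemma ncard_skDist_eq_three (hu : sk2Vert u) :
    {v | sk2Vert v ∧ skDist u v = 3}.ncard = 2 * (d - 1) := by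
  have hlayer : {v | sk2Vert v ∧ skDist u v = 3}
      = {v | v 0 ∈ ({u 0} : Finset _) ∧ v 1 ∈ ({u 0, u 1}ᶜ : Finset _)} ∪
        {v | v 0 ∈ ({u 0, u 1}ᶜ : Finset _) ∧ v 1 ∈ ({u 1} : Finset _)} := by
    ext v; simp only [Set.mem_union, Set.mem_ofPred_eq, skDist, mem_compl, mem_insert,
      mem_singleton]
    split_ifs <;> grind
  rw [hlayer, Set.ncard_union_eq, ncard_setOf_fst_mem_snd_mem _ _ fun x _ => card_compl_pair hu,
    ncard_setOf_fst_mem_snd_mem _ _ fun x _ => card_singleton (u 1), card_singleton,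
    card_compl_pair hu]
  · ring
  · rw [Set.disjoint_left]
    grind [mem_compl]

lemma ncard_skDist_eq_four (hu : sk2Vert u) :
    {v | sk2Vert v ∧ skDist u v = 4}.ncard = 1 := by
  have hlayer : {v | sk2Vert v ∧ skDist u v = 4}
      = {v | v 0 ∈ ({u 1} : Finset _) ∧ v 1 ∈ ({u 0} : Finset _)} := by
    ext v; simp only [Set.mem_ofPred_eq, skDist, mem_singleton]; split_ifs <;> grind
  rw [hlayer, ncard_setOf_fst_mem_snd_mem _ _ fun x _ => card_singleton _, card_singleton]

end Layers

/-- In `sK(d,2)` with `d ≥ 3`, from any fixed vertex the numbers of vertices at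
distance `0,1,2,3,4` are `1, d−1, (d−1)², 2(d−1), 1`, summing to `d² + d`, the total
number of vertices; every vertex is within distance `4` (so the diameter is `4`) and
there is a unique vertex at maximum distance `4`. -/
theorem stmt17 (d : ℕ) (hd : 3 ≤ d)
    (u : Fin 2 → Fin (d + 1)) (hu : sk2Vert u) :
    {v : Fin 2 → Fin (d + 1) | sk2Vert v ∧ sk2DistEq u v 0}.ncard = 1 ∧
    {v : Fin 2 → Fin (d + 1) | sk2Vert v ∧ sk2DistEq u v 1}.ncard = d - 1 ∧
    {v : Fin 2 → Fin (d + 1) | sk2Vert v ∧ sk2DistEq u v 2}.ncard = (d - 1) ^ 2 ∧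
    {v : Fin 2 → Fin (d + 1) | sk2Vert v ∧ sk2DistEq u v 3}.ncard = 2 * (d - 1) ∧
    {v : Fin 2 → Fin (d + 1) | sk2Vert v ∧ sk2DistEq u v 4}.ncard = 1 ∧
    1 + (d - 1) + (d - 1) ^ 2 + 2 * (d - 1) + 1 = d ^ 2 + d ∧
    {v : Fin 2 → Fin (d + 1) | sk2Vert v}.ncard = d ^ 2 + d ∧
    (∀ v : Fin 2 → Fin (d + 1), sk2Vert v → ∃ k ≤ 4, sk2Walk k u v) ∧
    ∃! v : Fin 2 → Fin (d + 1), sk2Vert v ∧ sk2DistEq u v 4 := by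
  have hn : 4 ≤ d + 1 := by omega
  have hfar : {v | sk2Vert v ∧ sk2DistEq u v 4}.ncard = 1 := by
    rw [setOf_sk2DistEq hn hu, ncard_skDist_eq_four hu]
  simp only [setOf_sk2DistEq hn hu]
  refine ⟨ncard_skDist_eq_zero hu, ncard_skDist_eq_one hu, ncard_skDist_eq_two hu,
    ncard_skDist_eq_three hu, ncard_skDist_eq_four hu, ?_, ncard_sk2Vert,
    fun v hv => ⟨_, skDist_le_four, sk2Walk_skDist hn hu hv⟩,
    Set.singleton_iff_unique_mem.1 (Set.ncard_eq_one.1 hfar)⟩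
  obtain ⟨e, rfl⟩ : ∃ e, d = e + 1 := ⟨d - 1, by omega⟩
  simp only [Nat.add_sub_cancel]
  ring
end
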